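/- Let n ≥ 2, m ≥ 1, and let 𝒬 be a nonempty family of functions Q : {1,…,m} × {1,…,n}² → [0,1]. For a sample S = (ω_1, …, ω_m) of subsets of {1,…,n}, each with nonempty complement ω̄_i, define the empirical Rademacher average f(S) = 2 · (1/2^m) Σ_{ν ∈ {−1,+1}^m} sup_{Q ∈ 𝒬} (1/m) Σ_{i=1}^m (ν_i/(|ω_i||ω̄_i|)) Σ_{p ∈ ω_i} Σ_{q ∈ ω̄_i} Q(i, p, q). Fix a user a, items b ∈ ω_a and b' ∈ ω̄_a, and let Ŝ_ab replace ω_a by ω_a' = (ω_a \ {b}) ∪ {b'}, leaving all other ω_i unchanged. Then | f(S) − f(Ŝ_ab) | ≤ 2(n−1)/(m |ω_a||ω̄_a|). -/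

import Mathlib

/-!
For fixed signs `ε` and a fixed `Q`, the swap changes only the `a`-th summand and leaves
`|ω_a|` and `|ω̄_a|` unchanged. In the pair sum `∑_{p ∈ ω_a} ∑_{q ∈ ω̄_a} Q a p q` the pairs with
`p ≠ b`, `q ≠ b'` are common to both samples; the others form one row and one column, `n - 1`
entries in `[0, 1]` on either side, so the pair sum moves by at most `n - 1`. A supremum moves no
more than the functions it is taken over, and averaging over the signs keeps the bound.
-/

open Finset

/-- The empirical Rademacher average
`f(S) = 2·(1/2^m) Σ_{ν∈{−1,+1}^m} sup_{Q∈𝒬} (1/m) Σ_i (ν_i/(|ω_i||ω̄_i|))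
  Σ_{p∈ω_i} Σ_{q∈ω̄_i} Q(i,p,q)`
of a function class `𝒬` over the sample `S = (ω_1, …, ω_m)`; sign vectors
`ν ∈ {−1,+1}^m` are encoded by Boolean vectors `ε : Fin m → Bool`. -/
noncomputable def radAvg {m n : ℕ} (𝒬 : Set (Fin m → Fin n → Fin n → ℝ))
    (ω : Fin m → Finset (Fin n)) : ℝ :=
  2 * ((1 / (2 : ℝ) ^ m) * ∑ ε : Fin m → Bool,
    sSup {t : ℝ | ∃ Q ∈ 𝒬, t = (1 / (m : ℝ)) *
      ∑ i, ((if ε i then (1 : ℝ) else -1) /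
          (((ω i).card : ℝ) * (((ω i)ᶜ).card : ℝ))) *
        ∑ p ∈ ω i, ∑ q ∈ (ω i)ᶜ, Q i p q})

section PairSums

variable {α : Type*}

lemma sum_mem_Icc_card {s : Finset α} {g : α → ℝ} (hg : ∀ x, g x ∈ Set.Icc (0 : ℝ) 1) :
    ∑ x ∈ s, g x ∈ Set.Icc (0 : ℝ) #s :=
  ⟨sum_nonneg fun x _ => (hg x).1, by simpa using sum_le_card_nsmul s g 1 fun x _ => (hg x).2⟩

variable [DecidableEq α]

lemma sum_sum_insert_insert {t u : Finset α} {x y : α} (hx : x ∉ t) (hy : y ∉ u)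
    (f : α → α → ℝ) :
    ∑ p ∈ insert x t, ∑ q ∈ insert y u, f p q =
      ∑ p ∈ t, ∑ q ∈ u, f p q + (∑ q ∈ insert y u, f x q + ∑ p ∈ t, f p y) := by
  rw [sum_insert hx]
  simp_rw [sum_insert hy, sum_add_distrib]
  ring

lemma sum_row_add_sum_col_mem_Icc {t u : Finset α} {x y : α} {f : α → α → ℝ}
    (hf : ∀ p q, f p q ∈ Set.Icc (0 : ℝ) 1) (hy : y ∉ u) :
    ∑ q ∈ insert y u, f x q + ∑ p ∈ t, f p y ∈ Set.Icc (0 : ℝ) (#t + #u + 1) := by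
  obtain ⟨hrow₀, hrow₁⟩ := sum_mem_Icc_card (s := insert y u) fun q => hf x q
  obtain ⟨hcol₀, hcol₁⟩ := sum_mem_Icc_card (s := t) fun p => hf p y
  rw [card_insert_of_notMem hy, Nat.cast_succ] at hrow₁
  constructor <;> linarith

lemma abs_sum_sum_insert_insert_sub_le {t u : Finset α} {x x' y y' : α} {f : α → α → ℝ}
    (hf : ∀ p q, f p q ∈ Set.Icc (0 : ℝ) 1)
    (hx : x ∉ t) (hx' : x' ∉ t) (hy : y ∉ u) (hy' : y' ∉ u) :
    |∑ p ∈ insert x t, ∑ q ∈ insert y u, f p q - ∑ p ∈ insert x' t, ∑ q ∈ insert y' u, f p q|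
      ≤ #t + #u + 1 := by
  rw [sum_sum_insert_insert hx hy, sum_sum_insert_insert hx' hy', add_sub_add_left_eq_sub]
  obtain ⟨h₀, h₁⟩ := sum_row_add_sum_col_mem_Icc (t := t) (x := x) hf hy
  obtain ⟨h₀', h₁'⟩ := sum_row_add_sum_col_mem_Icc (t := t) (x := x') hf hy'
  exact abs_sub_le_of_nonneg_of_le h₀ h₁ h₀' h₁'

end PairSums

section Swap

variable {α : Type*} [DecidableEq α] {s : Finset α} {b b' : α}

lemma card_insert_erase (hb : b ∈ s) (hb' : b' ∉ s) : #(insert b' (s.erase b)) = #s := by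
  rw [card_insert_of_notMem fun h => hb' (mem_of_mem_erase h), card_erase_add_one hb]

variable [Fintype α]

lemma compl_insert_erase (hb : b ∈ s) (hb' : b' ∉ s) :
    (insert b' (s.erase b))ᶜ = insert b (sᶜ.erase b') := by
  rw [compl_insert, compl_erase, erase_insert_of_ne (ne_of_mem_of_not_mem hb hb')]

lemma card_compl_insert_erase (hb : b ∈ s) (hb' : b' ∉ s) :
    #(insert b' (s.erase b))ᶜ = #sᶜ := by
  rw [card_compl, card_compl, card_insert_erase hb hb']

lemma abs_sum_sum_compl_swap_sub_le {f : α → α → ℝ} (hf : ∀ p q, f p q ∈ Set.Icc (0 : ℝ) 1)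
    (hb : b ∈ s) (hb' : b' ∉ s) :
    |∑ p ∈ s, ∑ q ∈ sᶜ, f p q -
        ∑ p ∈ insert b' (s.erase b), ∑ q ∈ (insert b' (s.erase b))ᶜ, f p q|
      ≤ Fintype.card α - 1 := by
  have hs : ∑ p ∈ s, ∑ q ∈ sᶜ, f p q =
      ∑ p ∈ insert b (s.erase b), ∑ q ∈ insert b' (sᶜ.erase b'), f p q := by
    rw [insert_erase hb, insert_erase (mem_compl.2 hb')]
  have hcard : (#(s.erase b) : ℝ) + #(sᶜ.erase b') + 1 = Fintype.card α - 1 := by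
    have := card_erase_add_one hb
    have := card_erase_add_one (mem_compl.2 hb')
    have := card_add_card_compl s
    rw [eq_sub_iff_add_eq]
    exact_mod_cast (by omega : #(s.erase b) + #(sᶜ.erase b') + 1 + 1 = Fintype.card α)
  rw [hs, compl_insert_erase hb hb', ← hcard]
  exact abs_sum_sum_insert_insert_sub_le hf (notMem_erase b s)
    (fun h => hb' (mem_of_mem_erase h)) (notMem_erase b' sᶜ)
    (fun h => mem_compl.1 (mem_of_mem_erase h) hb)

end Swap

section PairAvg

variable {α : Type*} [DecidableEq α] [Fintype α]

noncomputable def pairAvg (s : Finset α) (f : α → α → ℝ) : ℝ :=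
  (∑ p ∈ s, ∑ q ∈ sᶜ, f p q) / (#s * #sᶜ)

lemma pairAvg_mem_Icc (s : Finset α) {f : α → α → ℝ} (hf : ∀ p q, f p q ∈ Set.Icc (0 : ℝ) 1) :
    pairAvg s f ∈ Set.Icc (0 : ℝ) 1 := by
  have hrows (p : α) := sum_mem_Icc_card (s := sᶜ) fun q => hf p q
  have hsum : ∑ p ∈ s, ∑ q ∈ sᶜ, f p q ≤ #s * #sᶜ := by
    simpa using sum_le_card_nsmul s _ _ fun p _ => (hrows p).2
  exact ⟨div_nonneg (sum_nonneg fun p _ => (hrows p).1) (by positivity),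
    div_le_one_of_le₀ hsum (by positivity)⟩

lemma abs_pairAvg_swap_sub_le {s : Finset α} {b b' : α} {f : α → α → ℝ}
    (hf : ∀ p q, f p q ∈ Set.Icc (0 : ℝ) 1) (hb : b ∈ s) (hb' : b' ∉ s) :
    |pairAvg s f - pairAvg (insert b' (s.erase b)) f| ≤ (Fintype.card α - 1) / (#s * #sᶜ) := by
  rw [pairAvg, pairAvg, card_insert_erase hb hb', card_compl_insert_erase hb hb', ← sub_div,
    abs_div, abs_of_nonneg (by positivity : (0 : ℝ) ≤ #s * #sᶜ)]
  gcongr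
  exact abs_sum_sum_compl_swap_sub_le hf hb hb'

end PairAvg

section Rademacher

variable {α : Type*} [DecidableEq α] [Fintype α] {m : ℕ}

noncomputable def rademacherCorr (ω : Fin m → Finset α) (ε : Fin m → Bool)
    (Q : Fin m → α → α → ℝ) : ℝ :=
  (1 / (m : ℝ)) * ∑ i, (if ε i then (1 : ℝ) else -1) * pairAvg (ω i) (Q i)

lemma radAvg_eq_sum_sSup {n : ℕ} (𝒬 : Set (Fin m → Fin n → Fin n → ℝ))
    (ω : Fin m → Finset (Fin n)) :
    radAvg 𝒬 ω = 2 * ((1 / (2 : ℝ) ^ m) * ∑ ε, sSup (rademacherCorr ω ε '' 𝒬)) := by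
  unfold radAvg
  congr! with ε
  ext t
  simp only [Set.mem_ofPred_eq, Set.mem_image, rademacherCorr, pairAvg, eq_comm (b := t),
    div_mul_eq_mul_div, mul_div_assoc]

lemma abs_rademacherCorr_sub_update (ω : Fin m → Finset α) (ε : Fin m → Bool)
    (Q : Fin m → α → α → ℝ) (a : Fin m) (t : Finset α) :
    |rademacherCorr ω ε Q - rademacherCorr (Function.update ω a t) ε Q| =
      (1 / (m : ℝ)) * |pairAvg (ω a) (Q a) - pairAvg t (Q a)| := by
  rw [rademacherCorr, rademacherCorr, ← mul_sub, ← sum_sub_distrib,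
    sum_eq_single a (fun i _ hi => by rw [Function.update_of_ne hi, sub_self]) (by simp),
    Function.update_self, ← mul_sub, abs_mul, abs_mul, abs_of_nonneg (by positivity)]
  split_ifs <;> simp

lemma rademacherCorr_le_one (ω : Fin m → Finset α) (ε : Fin m → Bool)
    {Q : Fin m → α → α → ℝ} (hQ : ∀ i p q, Q i p q ∈ Set.Icc (0 : ℝ) 1) :
    rademacherCorr ω ε Q ≤ 1 := by
  have hterm (i : Fin m) : (if ε i then (1 : ℝ) else -1) * pairAvg (ω i) (Q i) ≤ 1 := by
    obtain ⟨h₀, h₁⟩ := pairAvg_mem_Icc (ω i) (hQ i)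
    split_ifs <;> linarith
  calc rademacherCorr ω ε Q ≤ (1 / (m : ℝ)) * m := by
        unfold rademacherCorr
        gcongr
        simpa using sum_le_card_nsmul univ _ _ fun i _ => hterm i
    _ ≤ 1 := by
        rw [one_div_mul_eq_div]
        exact div_self_le_one _

end Rademacher

lemma abs_csSup_image_sub_le {ι : Type*} {s : Set ι} (hs : s.Nonempty) {g g' : ι → ℝ} {c : ℝ}
    (hg : BddAbove (g '' s)) (hg' : BddAbove (g' '' s)) (h : ∀ x ∈ s, |g x - g' x| ≤ c) :
    |sSup (g '' s) - sSup (g' '' s)| ≤ c := by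
  rw [abs_sub_le_iff, sub_le_iff_le_add, sub_le_iff_le_add]
  constructor
  · refine csSup_le (hs.image g) ?_
    rintro _ ⟨x, hx, rfl⟩
    have := le_csSup hg' ⟨x, hx, rfl⟩
    linarith [(abs_sub_le_iff.1 (h x hx)).1]
  · refine csSup_le (hs.image g') ?_
    rintro _ ⟨x, hx, rfl⟩
    have := le_csSup hg ⟨x, hx, rfl⟩
    linarith [(abs_sub_le_iff.1 (h x hx)).2]

lemma abs_mean_sub_mean_le {ι : Type*} [Fintype ι] [Nonempty ι] {x y : ι → ℝ} {c : ℝ}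
    (h : ∀ i, |x i - y i| ≤ c) :
    |(1 / (Fintype.card ι : ℝ)) * ∑ i, x i - (1 / (Fintype.card ι : ℝ)) * ∑ i, y i| ≤ c := by
  rw [← mul_sub, ← sum_sub_distrib, abs_mul, abs_of_pos (by positivity), one_div_mul_eq_div,
    div_le_iff₀ (by positivity), mul_comm, ← nsmul_eq_mul]
  exact (abs_sum_le_sum_abs _ _).trans (sum_le_card_nsmul _ _ _ fun i _ => h i)

theorem radAvg_swap_stability_general (m n : ℕ)
    (𝒬 : Set (Fin m → Fin n → Fin n → ℝ)) (h𝒬 : 𝒬.Nonempty)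
    (hrange : ∀ Q ∈ 𝒬, ∀ i p q, Q i p q ∈ Set.Icc (0 : ℝ) 1)
    (ω : Fin m → Finset (Fin n))
    (a : Fin m) (b b' : Fin n) (hb : b ∈ ω a) (hb' : b' ∈ (ω a)ᶜ) :
    |radAvg 𝒬 ω - radAvg 𝒬 (Function.update ω a (insert b' ((ω a).erase b)))| ≤
      2 * ((n : ℝ) - 1) / ((m : ℝ) * ((ω a).card : ℝ) * (((ω a)ᶜ).card : ℝ)) := by
  set ω' := Function.update ω a (insert b' ((ω a).erase b))
  have hbdd (ω : Fin m → Finset (Fin n)) (ε : Fin m → Bool) :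
      BddAbove (rademacherCorr ω ε '' 𝒬) :=
    ⟨1, by rintro _ ⟨Q, hQ, rfl⟩; exact rademacherCorr_le_one ω ε (hrange Q hQ)⟩
  have hsup (ε : Fin m → Bool) :
      |sSup (rademacherCorr ω ε '' 𝒬) - sSup (rademacherCorr ω' ε '' 𝒬)| ≤
        ((n : ℝ) - 1) / ((m : ℝ) * #(ω a) * #(ω a)ᶜ) := by
    refine abs_csSup_image_sub_le h𝒬 (hbdd ω ε) (hbdd ω' ε) fun Q hQ => ?_
    have hswap := abs_pairAvg_swap_sub_le (hrange Q hQ a) hb (mem_compl.1 hb')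
    rw [Fintype.card_fin] at hswap
    rw [abs_rademacherCorr_sub_update, show ((n : ℝ) - 1) / (m * #(ω a) * #(ω a)ᶜ) =
      1 / m * (((n : ℝ) - 1) / (#(ω a) * #(ω a)ᶜ)) by ring]
    gcongr
  have hmean := abs_mean_sub_mean_le hsup
  simp only [Fintype.card_fun, Fintype.card_bool, Fintype.card_fin, Nat.cast_pow,
    Nat.cast_ofNat] at hmean
  rw [radAvg_eq_sum_sSup, radAvg_eq_sum_sSup, ← mul_sub, abs_mul, abs_two, mul_div_assoc]
  exact mul_le_mul_of_nonneg_left hmean zero_le_two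

/-- Bounded-difference property of the empirical Rademacher average: replacing in the
sample the positive set `ω_a` by `ω_a' = (ω_a \ {b}) ∪ {b'}` (for `b ∈ ω_a`,
`b' ∈ ω̄_a`) changes `f(S)` by at most `2(n−1)/(m|ω_a||ω̄_a|)`. -/
theorem radAvg_swap_stability (m n : ℕ) (hm : 1 ≤ m) (hn : 2 ≤ n)
    (𝒬 : Set (Fin m → Fin n → Fin n → ℝ)) (h𝒬 : 𝒬.Nonempty)
    (hrange : ∀ Q ∈ 𝒬, ∀ i p q, Q i p q ∈ Set.Icc (0 : ℝ) 1)
    (ω : Fin m → Finset (Fin n))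
    (hω : ∀ i, (ω i).Nonempty) (hωc : ∀ i, ((ω i)ᶜ).Nonempty)
    (a : Fin m) (b b' : Fin n) (hb : b ∈ ω a) (hb' : b' ∈ (ω a)ᶜ) :
    |radAvg 𝒬 ω - radAvg 𝒬 (Function.update ω a (insert b' ((ω a).erase b)))| ≤
      2 * ((n : ℝ) - 1) / ((m : ℝ) * ((ω a).card : ℝ) * (((ω a)ᶜ).card : ℝ)) :=
  radAvg_swap_stability_general m n 𝒬 h𝒬 hrange ω a b b' hb hb'
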